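/- arXiv:2302.13351 — 2 statements merged into one kernel-verified Lean document; each statement's English description precedes it below -/
import Mathlib

section
/- For every n ≥ 3, any local identifying code C in the binary hypercube F_2^n satisfies |C| ≥ 3·2^n/(3n−2). -/
open SimpleGraph

/-- The closed neighbourhood of a vertex. -/
def cnbr {V : Type*} (G : SimpleGraph V) (u : V) : Set V := insert u (G.neighborSet u)

/-- The `I`-set of a vertex with respect to a code `C`. -/
def iset {V : Type*} (G : SimpleGraph V) (C : Set V) (u : V) : Set V := cnbr G u ∩ C

/-- `C` is a dominating set (covering code). -/
def IsDominating {V : Type*} (G : SimpleGraph V) (C : Set V) : Prop :=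
  ∀ u, (iset G C u).Nonempty

/-- `C` is a local identifying code. -/
def IsLocalID {V : Type*} (G : SimpleGraph V) (C : Set V) : Prop :=
  IsDominating G C ∧ ∀ u v, G.Adj u v → iset G C u ≠ iset G C v

/-- `C` is a local locating-dominating code. -/
def IsLocalLD {V : Type*} (G : SimpleGraph V) (C : Set V) : Prop :=
  IsDominating G C ∧ ∀ u v, G.Adj u v → u ∉ C → v ∉ C → iset G C u ≠ iset G C v

/-- `C` is an identifying code. -/
def IsID {V : Type*} (G : SimpleGraph V) (C : Set V) : Prop :=
  IsDominating G C ∧ ∀ u v : V, u ≠ v → iset G C u ≠ iset G C v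

/-- `C` is a locating-dominating code. -/
def IsLD {V : Type*} (G : SimpleGraph V) (C : Set V) : Prop :=
  IsDominating G C ∧ ∀ u v : V, u ≠ v → u ∉ C → v ∉ C → iset G C u ≠ iset G C v

/-- The share of a codeword `c`. -/
noncomputable def share {V : Type*} (G : SimpleGraph V) (C : Set V) (c : V) : ℝ :=
  ∑ᶠ u ∈ cnbr G c, (1 : ℝ) / (iset G C u).ncard

/-- The binary `n`-dimensional hypercube. -/
def cube (n : ℕ) : SimpleGraph (Fin n → ZMod 2) where
  Adj x y := hammingDist x y = 1
  symm := ⟨fun x y (h : hammingDist x y = 1) => show hammingDist y x = 1 by rwa [hammingDist_comm]⟩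
  loopless := ⟨fun x (h : hammingDist x x = 1) => by simp only [hammingDist_self] at h; exact absurd h (by norm_num)⟩

/-!
Discharging: every vertex `u` splits one unit of charge equally among the codewords of `I(u)`,
so the shares `∑_{u ∈ N[c]} 1 / |I(u)|` of the codewords add up to `2 ^ n`, and it suffices
to bound every share by `n - 2/3`. Let `c` be a codeword with neighbours `c + eᵢ`. If some
`I(c + eᵢ) = {c}`, then `|I(c)| ≥ 2`, at least two neighbours have `|I| ≥ 2` (otherwise `c`
and its remaining neighbour would see the same codewords), and since two adjacent codewords
cannot both have an `I`-set of size `2`, one of these terms is at most `1/3`. Otherwise every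
neighbour contributes at most `1/2`, which suffices unless `n = 3` and `I(c) = {c}`; there a
parity argument yields a neighbour with `|I| ≥ 3`.
-/

lemma two_le_ncard_of_mem_of_ne_singleton {α : Type*} [Finite α] {s : Set α} {a : α} (ha : a ∈ s)
    (hs : s ≠ {a}) : 2 ≤ s.ncard :=
  Set.one_lt_ncard_iff_nontrivial.2 ((Set.nontrivial_iff_ne_singleton ha).2 hs)

lemma sum_le_add_card_sub_one_mul {ι : Type*} [DecidableEq ι] {s : Finset ι} {f : ι → ℝ} {k : ι}
    {b : ℝ} (hk : k ∈ s) (h : ∀ i ∈ s, f i ≤ b) : ∑ i ∈ s, f i ≤ f k + (s.card - 1) * b := by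
  have hrest :=
    Finset.sum_le_card_nsmul (s.erase k) f b fun i hi => h i (Finset.mem_of_mem_erase hi)
  rw [nsmul_eq_mul, Finset.card_erase_of_mem hk, Nat.cast_pred (Finset.card_pos.2 ⟨k, hk⟩)]
    at hrest
  rw [← Finset.add_sum_erase s f hk]
  linarith

lemma one_div_natCast_le {m : ℕ} {k : ℝ} (hk : 0 < k) (h : k ≤ m) : 1 / (m : ℝ) ≤ 1 / k :=
  one_div_le_one_div_of_le hk h

section Graph

variable {V : Type*} {G : SimpleGraph V} {C : Set V} {c u x y : V}

lemma mem_cnbr : y ∈ cnbr G x ↔ y = x ∨ G.Adj x y := Iff.rfl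

lemma mem_cnbr_comm : y ∈ cnbr G x ↔ x ∈ cnbr G y := by
  rw [mem_cnbr, mem_cnbr, G.adj_comm, eq_comm]

lemma mem_iset_self (hc : c ∈ C) : c ∈ iset G C c := ⟨Set.mem_insert c _, hc⟩

lemma mem_iset_of_adj (h : G.Adj u c) (hc : c ∈ C) : c ∈ iset G C u := ⟨Or.inr h, hc⟩

lemma iset_eq_inter {s : Set V} (hs : s ⊆ cnbr G x) (h : iset G C x ⊆ s) :
    iset G C x = s ∩ C :=
  Set.Subset.antisymm (fun _ hw => ⟨h hw, hw.2⟩) fun _ hw => ⟨hs hw.1, hw.2⟩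

lemma two_le_ncard_iset_of_eq_singleton [Finite V] (hC : IsLocalID G C) (hcu : G.Adj c u)
    (hc : c ∈ C) (hu : iset G C u = {c}) : 2 ≤ (iset G C c).ncard :=
  two_le_ncard_of_mem_of_ne_singleton (mem_iset_self hc) (hu ▸ hC.2 c u hcu)

/-- Two adjacent codewords both lie in `I(c) ∩ I(u)`, so the two `I`-sets cannot both be
exactly `{c, u}`. -/
lemma three_le_ncard_iset_or [Finite V] (hC : IsLocalID G C) (hcu : G.Adj c u) (hc : c ∈ C)
    (hu : u ∈ C) : 3 ≤ (iset G C c).ncard ∨ 3 ≤ (iset G C u).ncard := by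
  by_contra! h
  have hpair : ({c, u} : Set V).ncard = 2 := Set.ncard_pair hcu.ne
  have eq_pair : ∀ {x}, c ∈ iset G C x → u ∈ iset G C x → (iset G C x).ncard < 3 →
      {c, u} = iset G C x := fun {_} hcx hux hx =>
    Set.eq_of_subset_of_ncard_le (Set.insert_subset hcx (Set.singleton_subset_iff.2 hux))
      (by omega)
  exact hC.2 c u hcu <| (eq_pair (mem_iset_self hc) (mem_iset_of_adj hcu hu) h.1).symm.trans
    (eq_pair (mem_iset_of_adj hcu.symm hc) (mem_iset_self hu) h.2)

theorem sum_share_eq_card [Fintype V] (hC : IsDominating G C) :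
    ∑ᶠ c ∈ C, share G C c = Fintype.card V := by
  classical
  simp_rw [share, finsum_mem_eq_toFinset_sum]
  rw [Finset.sum_comm' (t' := Finset.univ) (s' := fun u => (iset G C u).toFinset)]
  · have hone : ∀ u, ∑ _c ∈ (iset G C u).toFinset, 1 / ((iset G C u).ncard : ℝ) = 1 := by
      intro u
      have hpos : ((iset G C u).ncard : ℝ) ≠ 0 := by
        exact_mod_cast ((Set.ncard_pos (Set.toFinite _)).2 (hC u)).ne'
      rw [Finset.sum_const, ← Set.ncard_eq_toFinset_card', nsmul_eq_mul, mul_one_div_cancel hpos]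
    rw [Finset.sum_congr rfl fun u _ => hone u, Finset.sum_const, Finset.card_univ, nsmul_one]
  · intro c u
    simp only [Set.mem_toFinset, Finset.mem_univ, and_true]
    exact ⟨fun h => ⟨mem_cnbr_comm.1 h.2, h.1⟩, fun h => ⟨h.2, mem_cnbr_comm.1 h.1⟩⟩

theorem card_le_ncard_mul_of_share_le [Fintype V] (hC : IsDominating G C) {b : ℝ}
    (hb : ∀ c ∈ C, share G C c ≤ b) : (Fintype.card V : ℝ) ≤ C.ncard * b := by
  classical
  rw [← sum_share_eq_card hC, finsum_mem_eq_toFinset_sum, Set.ncard_eq_toFinset_card',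
    ← nsmul_eq_mul]
  exact Finset.sum_le_card_nsmul _ _ _ fun c hc => hb c (Set.mem_toFinset.1 hc)

end Graph

section ZModTwo

variable {ι : Type*} [DecidableEq ι] (x : ι → ZMod 2)

lemma add_single_add_single_self (i : ι) : x + Pi.single i 1 + Pi.single i 1 = x := by
  rw [add_assoc, ← Pi.single_add, show (1 + 1 : ZMod 2) = 0 from rfl, Pi.single_zero, add_zero]

lemma add_single_ne (i : ι) : x + Pi.single i 1 ≠ x := by
  simp

lemma add_single_add_single_ne {i j : ι} (hij : i ≠ j) :
    x + Pi.single i 1 + Pi.single j 1 ≠ x := fun h => by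
  simpa [hij] using congrFun h i

lemma add_single_injective : Function.Injective fun i : ι => x + Pi.single i 1 := by
  intro i j h
  by_contra hij
  simpa [hij] using congrFun h i

lemma hammingNorm_eq_one_iff [Fintype ι] (v : ι → ZMod 2) :
    hammingNorm v = 1 ↔ ∃ i, v = Pi.single i 1 := by
  simp only [hammingNorm, Finset.card_eq_one, Finset.eq_singleton_iff_unique_mem,
    Finset.mem_filter, Finset.mem_univ, true_and]
  refine exists_congr fun i => ⟨fun ⟨hi, h⟩ => funext fun j => ?_, ?_⟩
  · by_cases hj : j = i
    · subst hj
      simpa using (show ∀ a : ZMod 2, a ≠ 0 → a = 1 by decide) _ hi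
    · simpa [hj] using not_imp_comm.1 (h j) hj
  · rintro rfl
    simp +contextual [Pi.single_apply]

end ZModTwo

section Cube

variable {n : ℕ} {C : Set (Fin n → ZMod 2)} {c : Fin n → ZMod 2}

lemma cube_adj_iff {x y : Fin n → ZMod 2} : (cube n).Adj x y ↔ ∃ i, y = x + Pi.single i 1 := by
  change hammingDist x y = 1 ↔ _
  rw [hammingDist_eq_hammingNorm, hammingNorm_eq_one_iff]
  simp only [neg_add_eq_sub, sub_eq_iff_eq_add']

lemma cube_adj_add_single (x : Fin n → ZMod 2) (i : Fin n) :
    (cube n).Adj x (x + Pi.single i 1) :=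
  cube_adj_iff.2 ⟨i, rfl⟩

lemma mem_cnbr_cube {x y : Fin n → ZMod 2} :
    y ∈ cnbr (cube n) x ↔ y = x ∨ ∃ i, y = x + Pi.single i 1 := by
  rw [mem_cnbr, cube_adj_iff]

lemma cnbr_cube (x : Fin n → ZMod 2) :
    cnbr (cube n) x = insert x (Set.range fun i => x + Pi.single i 1) := by
  ext y
  simp only [mem_cnbr_cube, Set.mem_insert_iff, Set.mem_range, eq_comm]

lemma share_cube :
    share (cube n) C c = 1 / (iset (cube n) C c).ncard
      + ∑ i, 1 / ((iset (cube n) C (c + Pi.single i 1)).ncard : ℝ) := by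
  rw [share, cnbr_cube, finsum_mem_insert _ (by rintro ⟨i, hi⟩; exact add_single_ne c i hi)
    (Set.finite_range _), finsum_mem_range (add_single_injective c), finsum_eq_sum_of_fintype]

lemma two_le_ncard_iset_add_single (hc : c ∈ C) {i : Fin n}
    (hi : iset (cube n) C (c + Pi.single i 1) ≠ {c}) :
    2 ≤ (iset (cube n) C (c + Pi.single i 1)).ncard :=
  two_le_ncard_of_mem_of_ne_singleton (mem_iset_of_adj (cube_adj_add_single c i).symm hc) hi

noncomputable def crowdedDirs (C : Set (Fin n → ZMod 2)) (c : Fin n → ZMod 2) : Finset (Fin n) :=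
  Finset.univ.filter fun i => iset (cube n) C (c + Pi.single i 1) ≠ {c}

lemma mem_crowdedDirs {i : Fin n} :
    i ∈ crowdedDirs C c ↔ iset (cube n) C (c + Pi.single i 1) ≠ {c} := by
  simp [crowdedDirs]

lemma sum_one_div_ncard_iset_add_single :
    ∑ i, 1 / ((iset (cube n) C (c + Pi.single i 1)).ncard : ℝ)
      = ∑ i ∈ crowdedDirs C c, 1 / ((iset (cube n) C (c + Pi.single i 1)).ncard : ℝ)
        + (n - (crowdedDirs C c).card) := by
  set S := Finset.univ.filter fun i => ¬ iset (cube n) C (c + Pi.single i 1) ≠ {c}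
  have hS : ∑ i ∈ S, 1 / ((iset (cube n) C (c + Pi.single i 1)).ncard : ℝ) = S.card := by
    rw [Finset.card_eq_sum_ones, Nat.cast_sum]
    refine Finset.sum_congr rfl fun j hj => ?_
    simp [not_not.1 (Finset.mem_filter.1 hj).2]
  have hcard : ((crowdedDirs C c).card : ℝ) + S.card = n := by
    exact_mod_cast (Finset.card_filter_add_card_filter_not _).trans (Finset.card_fin n)
  rw [← Finset.sum_filter_add_sum_filter_not Finset.univ
    fun i => iset (cube n) C (c + Pi.single i 1) ≠ {c}, hS, ← hcard, add_sub_cancel_left]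
  rfl

end Cube

section ShareBound

variable {n : ℕ} {C : Set (Fin n → ZMod 2)} {c : Fin n → ZMod 2}

lemma not_forall_ne_iset_add_single_eq_singleton (hC : IsLocalID (cube n) C) (hc : c ∈ C)
    (k : Fin n) : ¬ ∀ j ≠ k, iset (cube n) C (c + Pi.single j 1) = {c} := by
  intro h
  set u := c + Pi.single k 1
  have hcu : (cube n).Adj c u := cube_adj_add_single c k
  have hIc : iset (cube n) C c ⊆ {c, u} := by
    rintro w ⟨hw, hwC⟩
    obtain rfl | ⟨j, rfl⟩ := mem_cnbr_cube.1 hw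
    · exact Or.inl rfl
    by_cases hjk : j = k
    · exact Or.inr (by rw [hjk]; rfl)
    have hw' := h j hjk ▸ mem_iset_self (G := cube n) hwC
    exact absurd hw' (add_single_ne c j)
  have hIu : iset (cube n) C u ⊆ {c, u} := by
    rintro w ⟨hw, hwC⟩
    obtain rfl | ⟨j, rfl⟩ := mem_cnbr_cube.1 hw
    · exact Or.inr rfl
    by_cases hjk : j = k
    · exact Or.inl (by rw [hjk, add_single_add_single_self])
    have hw' : u + Pi.single j 1 ∈ iset (cube n) C (c + Pi.single j 1) :=
      ⟨by rw [add_right_comm]; exact Or.inr (cube_adj_add_single _ k), hwC⟩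
    rw [h j hjk] at hw'
    exact absurd hw' (add_single_add_single_ne c (Ne.symm hjk))
  have hc_pair : {c, u} ⊆ cnbr (cube n) c :=
    Set.insert_subset (Set.mem_insert c _) (Set.singleton_subset_iff.2 (Or.inr hcu))
  have hu_pair : {c, u} ⊆ cnbr (cube n) u :=
    Set.insert_subset (Or.inr hcu.symm) (Set.singleton_subset_iff.2 (Set.mem_insert u _))
  exact hC.2 c u hcu ((iset_eq_inter hc_pair hIc).trans (iset_eq_inter hu_pair hIu).symm)

lemma one_lt_card_crowdedDirs (hn : 0 < n) (hC : IsLocalID (cube n) C) (hc : c ∈ C) :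
    1 < (crowdedDirs C c).card := by
  have : Nonempty (Fin n) := ⟨⟨0, hn⟩⟩
  by_contra! h
  obtain ⟨k, hk⟩ := Finset.card_le_one_iff_subset_singleton.1 h
  refine not_forall_ne_iset_add_single_eq_singleton hC hc k fun j hj => ?_
  by_contra hne
  exact hj (Finset.mem_singleton.1 (hk (mem_crowdedDirs.2 hne)))

lemma share_le_of_iset_add_single_eq_singleton (hC : IsLocalID (cube n) C) (hc : c ∈ C)
    {i : Fin n} (hi : iset (cube n) C (c + Pi.single i 1) = {c}) :
    share (cube n) C c ≤ n - 2 / 3 := by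
  set t := fun u => ((iset (cube n) C u).ncard : ℝ)
  set T := crowdedDirs C c
  have hT : 1 < T.card := one_lt_card_crowdedDirs i.pos hC hc
  have ht : 2 ≤ (iset (cube n) C c).ncard :=
    two_le_ncard_iset_of_eq_singleton hC (cube_adj_add_single c i) hc hi
  obtain ⟨k, hkC⟩ : ∃ k, c + Pi.single k 1 ∈ C := by
    obtain ⟨w, ⟨hw, hwC⟩, hwc⟩ := (Set.one_lt_ncard_iff_nontrivial.1 ht).exists_ne c
    obtain rfl | ⟨k, rfl⟩ := mem_cnbr_cube.1 hw
    exacts [absurd rfl hwc, ⟨k, hwC⟩]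
  have hkT : k ∈ T := mem_crowdedDirs.2 fun h =>
    add_single_ne c k (by simpa [h] using mem_iset_self (G := cube n) hkC)
  have hkey : 1 / t c + 1 / t (c + Pi.single k 1) ≤ 5 / 6 := by
    have h2 := two_le_ncard_iset_add_single hc (mem_crowdedDirs.1 hkT)
    rcases three_le_ncard_iset_or hC (cube_adj_add_single c k) hc hkC with h3 | h3
    · have := one_div_natCast_le (k := 3) (by norm_num) (by exact_mod_cast h3)
      have := one_div_natCast_le (k := 2) (by norm_num) (by exact_mod_cast h2)
      linarith
    · have := one_div_natCast_le (k := 2) (by norm_num) (by exact_mod_cast ht)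
      have := one_div_natCast_le (k := 3) (by norm_num) (by exact_mod_cast h3)
      linarith
  have hsumT : ∑ i ∈ T, 1 / t (c + Pi.single i 1)
      ≤ 1 / t (c + Pi.single k 1) + (T.card - 1) * (1 / 2) :=
    sum_le_add_card_sub_one_mul hkT fun j hj => one_div_natCast_le (by norm_num)
      (by exact_mod_cast two_le_ncard_iset_add_single hc (mem_crowdedDirs.1 hj))
  have hT' : (2 : ℝ) ≤ T.card := by exact_mod_cast hT
  rw [share_cube, sum_one_div_ncard_iset_add_single]
  change 1 / t c + (∑ i ∈ T, 1 / t (c + Pi.single i 1) + (n - T.card)) ≤ _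
  linarith

/-- When `I(c) = {c}`, the codewords `c + eᵢ + eⱼ` form a graph on the coordinates in which `i`
has degree `|I(c + eᵢ)| - 1`; by the handshake lemma these degrees cannot all be odd. -/
lemma exists_ncard_iset_add_single_ne_two (hn : Odd n) (hc : c ∈ C)
    (hc1 : iset (cube n) C c = {c}) : ∃ i, (iset (cube n) C (c + Pi.single i 1)).ncard ≠ 2 := by
  classical
  set H := SimpleGraph.fromRel fun i j : Fin n => c + Pi.single i 1 + Pi.single j 1 ∈ C
  have hadj : ∀ i j, H.Adj i j ↔ i ≠ j ∧ c + Pi.single i 1 + Pi.single j 1 ∈ C := fun i j => by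
    rw [SimpleGraph.fromRel_adj, add_right_comm c (Pi.single j 1), or_self]
  have hdeg : ∀ i, (iset (cube n) C (c + Pi.single i 1)).ncard = H.degree i + 1 := by
    intro i
    have hI : iset (cube n) C (c + Pi.single i 1) = ↑(insert c
        ((H.neighborFinset i).image fun j => c + Pi.single i 1 + Pi.single j 1)) := by
      ext w
      simp only [Finset.coe_insert, Finset.coe_image, Set.mem_insert_iff, Set.mem_image,
        Finset.mem_coe, SimpleGraph.mem_neighborFinset, hadj]
      constructor
      · rintro ⟨hw, hwC⟩
        obtain rfl | ⟨j, rfl⟩ := mem_cnbr_cube.1 hw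
        · have := hc1 ▸ mem_iset_of_adj (cube_adj_add_single c i) hwC
          exact absurd this (add_single_ne c i)
        by_cases hij : i = j
        · exact Or.inl (by rw [hij, add_single_add_single_self])
        · exact Or.inr ⟨j, ⟨hij, hwC⟩, rfl⟩
      · rintro (rfl | ⟨j, ⟨_, hjC⟩, rfl⟩)
        · exact mem_iset_of_adj (cube_adj_add_single w i).symm hc
        · exact ⟨mem_cnbr_cube.2 (Or.inr ⟨j, rfl⟩), hjC⟩
    rw [hI, Set.ncard_coe_finset, Finset.card_insert_of_notMem,
      Finset.card_image_of_injective _ (add_single_injective _),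
      SimpleGraph.card_neighborFinset_eq_degree]
    simp only [Finset.mem_image, SimpleGraph.mem_neighborFinset, hadj, not_exists, not_and]
    exact fun j hj => add_single_add_single_ne c hj.1
  by_contra! h
  have hodd : ∀ i, Odd (H.degree i) := fun i => ⟨0, by have := hdeg i; have := h i; omega⟩
  have heven := H.even_card_odd_degree_vertices
  rw [Finset.filter_true_of_mem fun i _ => hodd i, Finset.card_univ, Fintype.card_fin] at heven
  exact Nat.not_even_iff_odd.2 hn heven

lemma share_le_of_forall_iset_add_single_ne_singleton (hn : 3 ≤ n) (hC : IsLocalID (cube n) C)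
    (hc : c ∈ C) (h : ∀ i, iset (cube n) C (c + Pi.single i 1) ≠ {c}) :
    share (cube n) C c ≤ n - 2 / 3 := by
  set t := fun u => ((iset (cube n) C u).ncard : ℝ)
  have hsum : ∀ k, ∑ i, 1 / t (c + Pi.single i 1)
      ≤ 1 / t (c + Pi.single k 1) + (n - 1) * (1 / 2) := fun k => by
      simpa using sum_le_add_card_sub_one_mul (Finset.mem_univ k) fun j _ =>
        one_div_natCast_le (k := 2) (by norm_num)
          (by exact_mod_cast two_le_ncard_iset_add_single hc (h j))
  have ht2 : ∀ k, 1 / t (c + Pi.single k 1) ≤ 1 / 2 := fun k =>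
    one_div_natCast_le (by norm_num) (by exact_mod_cast two_le_ncard_iset_add_single hc (h k))
  have hn' : (3 : ℝ) ≤ n := by exact_mod_cast hn
  let k₀ : Fin n := ⟨0, by omega⟩
  rw [share_cube]
  change 1 / t c + ∑ i, 1 / t (c + Pi.single i 1) ≤ _
  by_cases hc1 : iset (cube n) C c ≠ {c}
  · have := one_div_natCast_le (k := 2) (by norm_num)
      (by exact_mod_cast two_le_ncard_of_mem_of_ne_singleton (mem_iset_self hc) hc1)
    linarith [hsum k₀, ht2 k₀]
  rw [not_not] at hc1
  have ht1 : 1 / t c = 1 := by simp [t, hc1]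
  obtain rfl | h4 : n = 3 ∨ 4 ≤ n := by omega
  · obtain ⟨k, hk⟩ := exists_ncard_iset_add_single_ne_two (by decide) hc hc1
    have h3 : 3 ≤ (iset (cube 3) C (c + Pi.single k 1)).ncard := by
      have := two_le_ncard_iset_add_single hc (h k); omega
    have := one_div_natCast_le (k := 3) (by norm_num) (by exact_mod_cast h3)
    linarith [hsum k]
  · have h4' : (4 : ℝ) ≤ n := by exact_mod_cast h4
    linarith [hsum k₀, ht2 k₀]

theorem share_cube_le (hn : 3 ≤ n) (hC : IsLocalID (cube n) C) (hc : c ∈ C) :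
    share (cube n) C c ≤ n - 2 / 3 := by
  by_cases h : ∃ i, iset (cube n) C (c + Pi.single i 1) = {c}
  · obtain ⟨i, hi⟩ := h
    exact share_le_of_iset_add_single_eq_singleton hC hc hi
  · simp only [not_exists] at h
    exact share_le_of_forall_iset_add_single_ne_singleton hn hC hc h

end ShareBound

/-- For `n ≥ 3`, every local identifying code in `F_2^n` has size at least
`3·2^n/(3n−2)`. -/
theorem stmt7 (n : ℕ) (hn : 3 ≤ n) (C : Set (Fin n → ZMod 2))
    (hC : IsLocalID (cube n) C) :
    (3 * 2 ^ n : ℝ) / (3 * n - 2) ≤ (C.ncard : ℝ) := by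
  have hcount := card_le_ncard_mul_of_share_le hC.1 fun _ hc => share_cube_le hn hC hc
  rw [Fintype.card_fun, ZMod.card, Fintype.card_fin] at hcount
  have hn' : (3 : ℝ) ≤ n := by exact_mod_cast hn
  rw [div_le_iff₀ (by linarith)]
  push_cast at hcount
  linarith
end

section
/- Let C ⊆ F_2^n be a local identifying code. The code C' = F_2 ⊕ C = {(a,c) : a ∈ {0,1}, c ∈ C} ⊆ F_2^{n+1} is a local identifying code if and only if |I_C(c)| ≥ 2 for every c ∈ C. -/
open SimpleGraph

/-!
Splitting off the first coordinate identifies `F_2^{n+1}` with the box product `K_2 □ F_2^n`,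
and `F_2 ⊕ C` with `K_2 × C`. The `I`-set of `(a, x)` is then `{a} × I_C(x)`, together with
`(1 - a, x)` when `x ∈ C`. Neighbours differing in the tail are separated within their common
layer because `C` is locally identifying. The two words `(0, x)` and `(1, x)` are separated
exactly when `x` has a neighbour in `C`: for `x ∉ C` this follows from domination, and for
`x ∈ C` it means `|I_C(x)| ≥ 2`. If it fails, both `I`-sets equal `{0, 1} × {x}`.
-/

section Iset

variable {V W : Type*} {G : SimpleGraph V} {H : SimpleGraph W}

lemma mem_iset {C : Set V} {u y : V} : y ∈ iset G C u ↔ (y = u ∨ G.Adj u y) ∧ y ∈ C := by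
  simp [iset, cnbr]

lemma iset_preimage_iso (e : G ≃g H) (D : Set W) (u : V) :
    iset G (e ⁻¹' D) u = e ⁻¹' iset H D (e u) := by
  ext y
  simp only [mem_iset, Set.mem_preimage, e.map_adj_iff, e.apply_eq_iff_eq]

lemma isLocalID_preimage_iso (e : G ≃g H) {D : Set W} :
    IsLocalID G (e ⁻¹' D) ↔ IsLocalID H D := by
  have hsurj : Function.Surjective e := e.surjective
  simp only [IsLocalID, IsDominating, iset_preimage_iso, hsurj.nonempty_preimage,
    (Set.preimage_injective.2 hsurj).ne_iff, hsurj.forall, e.map_adj_iff]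

lemma two_le_ncard_iset_iff [Finite V] {C : Set V} {c : V} (hc : c ∈ C) :
    2 ≤ (iset G C c).ncard ↔ ∃ d ∈ C, G.Adj c d := by
  have hins : iset G C c = insert c (G.neighborSet c ∩ C) := Set.insert_inter_of_mem hc
  have hc' : c ∉ G.neighborSet c ∩ C := fun h => G.loopless.irrefl c h.1
  rw [hins, Set.ncard_insert_of_notMem hc', Nat.succ_le_succ_iff, Nat.one_le_iff_ne_zero,
    ← Nat.pos_iff_ne_zero, Set.ncard_pos]
  exact ⟨fun ⟨d, hd, hdC⟩ => ⟨d, hdC, hd⟩, fun ⟨d, hdC, hd⟩ => ⟨d, hd, hdC⟩⟩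

end Iset

section BoxProd

variable {α V : Type*} {K : SimpleGraph α} {G : SimpleGraph V} {C : Set V}

lemma mem_iset_boxProd {p q : α × V} :
    q ∈ iset (K □ G) (Prod.snd ⁻¹' C) p ↔
      (q.1 = p.1 ∧ q.2 ∈ iset G C p.2) ∨ (K.Adj p.1 q.1 ∧ q.2 = p.2 ∧ q.2 ∈ C) := by
  simp only [mem_iset, boxProd_adj, Prod.ext_iff, Set.mem_preimage]
  grind

lemma mk_mem_iset_boxProd {a : α} {x y : V} :
    (a, y) ∈ iset (K □ G) (Prod.snd ⁻¹' C) (a, x) ↔ y ∈ iset G C x := by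
  simp [mem_iset_boxProd]

lemma IsDominating.exists_adj_mem (hdom : IsDominating G C)
    (hnbr : ∀ c ∈ C, ∃ d ∈ C, G.Adj c d) (x : V) :
    ∃ s ∈ C, G.Adj x s := by
  obtain ⟨s, hs⟩ := hdom x
  rcases mem_iset.1 hs with ⟨rfl | hadj, hsC⟩
  · exact hnbr s hsC
  · exact ⟨s, hsC, hadj⟩

theorem isLocalID_boxProd (hC : IsLocalID G C) (hnbr : ∀ c ∈ C, ∃ d ∈ C, G.Adj c d) :
    IsLocalID (K □ G) (Prod.snd ⁻¹' C) := by
  refine ⟨fun p => ?_, fun p q hpq => ?_⟩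
  · obtain ⟨t, ht⟩ := hC.1 p.2
    exact ⟨(p.1, t), mk_mem_iset_boxProd.2 ht⟩
  rcases boxProd_adj.1 hpq with ⟨hK, hsnd⟩ | ⟨hG, hfst⟩
  · obtain ⟨s, hsC, hs⟩ := hC.1.exists_adj_mem hnbr p.2
    have hp : (p.1, s) ∈ iset (K □ G) (Prod.snd ⁻¹' C) p :=
      mk_mem_iset_boxProd.2 (mem_iset.2 ⟨Or.inr hs, hsC⟩)
    have hq : (p.1, s) ∉ iset (K □ G) (Prod.snd ⁻¹' C) q := by
      rw [mem_iset_boxProd]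
      rintro (⟨h1, -⟩ | ⟨-, h2, -⟩)
      · exact hK.ne h1
      · exact hs.ne (hsnd.trans h2.symm)
    exact fun h => hq (h ▸ hp)
  · intro h
    obtain ⟨a, x⟩ := p
    obtain ⟨b, y⟩ := q
    obtain rfl : a = b := hfst
    refine hC.2 x y hG (Set.ext fun t => ?_)
    rw [← mk_mem_iset_boxProd (K := K) (a := a), h, mk_mem_iset_boxProd]

lemma iset_top_boxProd_of_isolated {a : α} {c : V} (hc : c ∈ C)
    (hiso : ∀ d ∈ C, ¬G.Adj c d) :
    iset ((⊤ : SimpleGraph α) □ G) (Prod.snd ⁻¹' C) (a, c) = Prod.snd ⁻¹' {c} := by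
  ext q
  rw [mem_iset_boxProd]
  simp only [mem_iset, top_adj, Set.mem_preimage, Set.mem_singleton_iff]
  grind

theorem exists_adj_mem_of_isLocalID_top_boxProd [Nontrivial α]
    (h : IsLocalID ((⊤ : SimpleGraph α) □ G) (Prod.snd ⁻¹' C)) {c : V} (hc : c ∈ C) :
    ∃ d ∈ C, G.Adj c d := by
  by_contra! hiso
  obtain ⟨a, b, hab⟩ := exists_pair_ne α
  exact h.2 (a, c) (b, c) (boxProd_adj_left.2 hab)
    ((iset_top_boxProd_of_isolated hc hiso).trans (iset_top_boxProd_of_isolated hc hiso).symm)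

theorem isLocalID_top_boxProd_iff [Nontrivial α] (hC : IsLocalID G C) :
    IsLocalID ((⊤ : SimpleGraph α) □ G) (Prod.snd ⁻¹' C) ↔ ∀ c ∈ C, ∃ d ∈ C, G.Adj c d :=
  ⟨fun h _ hc => exists_adj_mem_of_isLocalID_top_boxProd h hc, isLocalID_boxProd hC⟩

end BoxProd

lemma hammingDist_eq_ite_add_tail {n : ℕ} {β : Type*} [DecidableEq β] (x y : Fin (n + 1) → β) :
    hammingDist x y = (if x 0 = y 0 then 0 else 1) + hammingDist (Fin.tail x) (Fin.tail y) := by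
  simp only [hammingDist, Finset.card_filter, Fin.sum_univ_succ]
  congr 1
  by_cases h : x 0 = y 0 <;> simp [h]

def cubeSuccIso (n : ℕ) : cube (n + 1) ≃g (⊤ : SimpleGraph (ZMod 2)) □ cube n where
  toEquiv := (Fin.consEquiv fun _ => ZMod 2).symm
  map_rel_iff' {x y} := by
    change (x 0 ≠ y 0 ∧ Fin.tail x = Fin.tail y ∨ hammingDist (Fin.tail x) (Fin.tail y) = 1 ∧
      x 0 = y 0) ↔ hammingDist x y = 1
    rw [hammingDist_eq_ite_add_tail, ← hammingDist_eq_zero]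
    by_cases h : x 0 = y 0 <;> simp [h]

/-- For a local identifying code `C ⊆ F_2^n`, the direct sum `F_2 ⊕ C ⊆ F_2^{n+1}`
is a local identifying code iff `|I_C(c)| ≥ 2` for every `c ∈ C`. -/
theorem stmt9 (n : ℕ) (C : Set (Fin n → ZMod 2)) (hC : IsLocalID (cube n) C) :
    IsLocalID (cube (n + 1)) (Fin.tail ⁻¹' C) ↔ ∀ c ∈ C, 2 ≤ (iset (cube n) C c).ncard := by
  change IsLocalID _ (cubeSuccIso n ⁻¹' (Prod.snd ⁻¹' C)) ↔ _
  rw [isLocalID_preimage_iso, isLocalID_top_boxProd_iff hC]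
  exact forall₂_congr fun c hc => (two_le_ncard_iset_iff hc).symm
end
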